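/- Let F : ℝ^d → ℝ be differentiable with ‖∇F(x) − ∇F(y)‖ ≤ L‖x − y‖ for all x, y ∈ ℝ^d (L > 0), and (μ_c, μ_H)-hidden strongly convex on X with μ_H > 0. Let (x^t, g^t)_{t≥0} be the projected SGD with momentum iterates with parameters β ∈ (0,1] and 0 < η ≤ β/(4L) and variance bound σ², and set Λ_t^{HB} := E[F(x^t) − F(x*) + (η/β)‖g^t − ∇F(x^t)‖²]. Then for every α with 0 < α ≤ min{β/2, μ_c² μ_H η / 4} and every T ≥ 0: Λ_T^{HB} ≤ (1 − α)^T Λ_0^{HB} + β η σ² / α. -/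

import Mathlib

open MeasureTheory
open scoped RealInnerProductSpace

noncomputable section

/-- `q` is the Euclidean projection of `p` onto `X`. -/
def IsProjection {d : ℕ} (X : Set (EuclideanSpace ℝ (Fin d))) (p q : EuclideanSpace ℝ (Fin d)) : Prop :=
  q ∈ X ∧ ∀ y ∈ X, ‖q - p‖ ≤ ‖y - p‖

/-- `F` is hidden convex on `X` with moduli `μc > 0` and `μH ≥ 0`, witnessed by the convex
set `U`, the bijection `c : X → U` satisfying `‖c x - c y‖ ≥ μc * ‖x - y‖`, and the
(`μH`-strongly) convex function `H : U → ℝ` with `F = H ∘ c` on `X`, where `H` attains its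
minimum over `U` at `ustar`. -/
def HiddenConvex {d : ℕ} (μc μH : ℝ) (X U : Set (EuclideanSpace ℝ (Fin d)))
    (c : EuclideanSpace ℝ (Fin d) → EuclideanSpace ℝ (Fin d)) (H F : EuclideanSpace ℝ (Fin d) → ℝ) (ustar : EuclideanSpace ℝ (Fin d)) : Prop :=
  Convex ℝ U ∧ Set.BijOn c X U ∧
    (∀ x ∈ X, ∀ y ∈ X, μc * ‖x - y‖ ≤ ‖c x - c y‖) ∧
    (∀ x ∈ X, F x = H (c x)) ∧
    (∀ u ∈ U, ∀ v ∈ U, ∀ t ∈ Set.Icc (0 : ℝ) 1,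
      H ((1 - t) • u + t • v) ≤
        (1 - t) * H u + t * H v - (1 - t) * t * μH / 2 * ‖u - v‖ ^ 2) ∧
    ustar ∈ U ∧ ∀ u ∈ U, H ustar ≤ H u

/-- The filtration `𝔉_t := σ(g^0, G^1, …, G^t)` for SGD with momentum. -/
def hbFiltration {Ω : Type} [MeasurableSpace Ω] {d : ℕ}
    (g0 : Ω → EuclideanSpace ℝ (Fin d)) (G : ℕ → Ω → EuclideanSpace ℝ (Fin d)) (t : ℕ) : MeasurableSpace Ω :=
  MeasurableSpace.comap g0 inferInstance ⊔
    ⨆ i ∈ Finset.Icc 1 t, MeasurableSpace.comap (G i) inferInstance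

/-! The Lyapunov function `Λ_t = E[F(x^t) - F(x*)] + (η/β) E‖g^t - ∇F(x^t)‖²` satisfies
`Λ_{t+1} ≤ (1 - α) Λ_t + βησ²`, which unrolls to the claim.

For the function values, hidden strong convexity yields a point `y ∈ X` with
`c y = (1 - α) c(x^t) + α u*`; it lies within `(α/μc) ‖c(x^t) - u*‖` of `x^t`, so the strong
convexity gain of `H` pays for the distance `‖x^t - y‖²`. Comparing the projected step with `y`
through the three-point inequality of the projection and `L`-smoothness gives
`F(x^{t+1}) - F(x*) ≤ (1 - α)(F(x^t) - F(x*)) + (η/2)‖g^t - ∇F(x^t)‖²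
  - (1/(2η) - L/2)‖x^{t+1} - x^t‖²`.

For the momentum error, `G^{t+1} - ∇F(x^{t+1})` has conditional mean zero given `𝔉_t`, hence is
orthogonal in `L²` to the `𝔉_t`-measurable part `g^t - ∇F(x^{t+1})` and contributes only `β²σ²`;
the drift `∇F(x^t) - ∇F(x^{t+1})` is handled by Young's inequality and absorbed by the negative
`‖x^{t+1} - x^t‖²` term, which is where `η ≤ β/(4L)` is needed. -/

section LipschitzGradient

variable {E : Type*} [NormedAddCommGroup E] [InnerProductSpace ℝ E] [CompleteSpace E]
  {F : E → ℝ} {F' : E → E} {L : ℝ}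

theorem abs_sub_sub_inner_le_of_lipschitz_gradient (hgrad : ∀ y, HasGradientAt F (F' y) y)
    (hLip : ∀ u v, ‖F' u - F' v‖ ≤ L * ‖u - v‖) (a b : E) :
    |F b - F a - ⟪F' a, b - a⟫| ≤ L / 2 * ‖b - a‖ ^ 2 := by
  set v := b - a
  have hderiv (s : ℝ) : HasDerivAt (fun s : ℝ => F (a + s • v) - F a - s * ⟪F' a, v⟫)
      (⟪F' (a + s • v), v⟫ - ⟪F' a, v⟫) s := by
    have hline : HasDerivAt (fun s : ℝ => a + s • v) v s := by
      simpa using ((hasDerivAt_id s).smul_const v).const_add a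
    have hcomp := (hgrad (a + s • v)).hasFDerivAt.comp_hasDerivAt s hline
    simp only [Function.comp_def, InnerProductSpace.toDual_apply_apply] at hcomp
    exact (hcomp.sub_const (F a)).sub (hasDerivAt_mul_const _)
  have hbound (s : ℝ) : HasDerivAt (fun s : ℝ => L / 2 * ‖v‖ ^ 2 * s ^ 2) (L * ‖v‖ ^ 2 * s) s := by
    refine ((hasDerivAt_pow 2 s).const_mul (L / 2 * ‖v‖ ^ 2)).congr_deriv ?_
    push_cast
    ring
  have key := image_norm_le_of_norm_deriv_right_le_deriv_boundary (a := 0) (b := 1)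
    (fun s _ => (hderiv s).continuousAt.continuousWithinAt)
    (fun s _ => (hderiv s).hasDerivWithinAt) (by simp) hbound
    (fun s hs => ?_) (Set.right_mem_Icc.2 zero_le_one)
  · simpa [v] using key
  · rw [Real.norm_eq_abs, ← inner_sub_left]
    calc |⟪F' (a + s • v) - F' a, v⟫| ≤ ‖F' (a + s • v) - F' a‖ * ‖v‖ := abs_real_inner_le_norm _ _
      _ ≤ L * ‖s • v‖ * ‖v‖ := by
        gcongr
        simpa using hLip (a + s • v) a
      _ = L * ‖v‖ ^ 2 * s := by rw [norm_smul, Real.norm_of_nonneg hs.1]; ring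

end LipschitzGradient

section Projection

variable {d : ℕ} {X : Set (EuclideanSpace ℝ (Fin d))} {p q y : EuclideanSpace ℝ (Fin d)}

theorem IsProjection.inner_sub_le_zero (hX : Convex ℝ X) (hq : IsProjection X p q) (hy : y ∈ X) :
    ⟪p - q, y - q⟫ ≤ 0 := by
  have : Nonempty X := ⟨⟨q, hq.1⟩⟩
  refine (norm_eq_iInf_iff_real_inner_le_zero hX hq.1).1 ?_ y hy
  refine le_antisymm (le_ciInf fun w => ?_) (ciInf_le ⟨0, ?_⟩ (⟨q, hq.1⟩ : X))
  · rw [norm_sub_rev p q, norm_sub_rev p]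
    exact hq.2 w w.2
  · rintro r ⟨w, rfl⟩
    exact norm_nonneg _

theorem IsProjection.norm_le (hq : IsProjection X p q) (hy : y ∈ X) : ‖q‖ ≤ ‖y‖ + 2 * ‖p‖ := by
  calc ‖q‖ = ‖(q - p) + p‖ := by rw [sub_add_cancel]
    _ ≤ ‖q - p‖ + ‖p‖ := norm_add_le _ _
    _ ≤ ‖y - p‖ + ‖p‖ := by gcongr; exact hq.2 y hy
    _ ≤ ‖y‖ + 2 * ‖p‖ := by linarith [norm_sub_le y p]

/-- Three-point inequality for the projected step `q = Π_X (x - η • v)`. -/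
theorem IsProjection.two_mul_inner_le {x v : EuclideanSpace ℝ (Fin d)} {η : ℝ} (hX : Convex ℝ X)
    (hq : IsProjection X (x - η • v) q) (hy : y ∈ X) :
    2 * η * ⟪v, q - y⟫ ≤ ‖x - y‖ ^ 2 - ‖q - x‖ ^ 2 - ‖y - q‖ ^ 2 := by
  have hvi := hq.inner_sub_le_zero hX hy
  have hpol := norm_sub_sq_real (x - q) (y - q)
  rw [sub_sub_sub_cancel_right, norm_sub_rev x q] at hpol
  rw [show x - η • v - q = (x - q) - η • v by abel, inner_sub_left, real_inner_smul_left] at hvi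
  rw [show q - y = -(y - q) by abel, inner_neg_right]
  linarith

theorem IsProjection.le_of_lipschitz_gradient {F : EuclideanSpace ℝ (Fin d) → ℝ}
    {F' : EuclideanSpace ℝ (Fin d) → EuclideanSpace ℝ (Fin d)} {L η : ℝ}
    {x v : EuclideanSpace ℝ (Fin d)}
    (hX : Convex ℝ X) (hgrad : ∀ y, HasGradientAt F (F' y) y)
    (hLip : ∀ u v, ‖F' u - F' v‖ ≤ L * ‖u - v‖) (hη : 0 < η)
    (hq : IsProjection X (x - η • v) q) (hy : y ∈ X) :
    F q ≤ F y + (1 / (2 * η) + L / 2) * ‖x - y‖ ^ 2 + η / 2 * ‖v - F' x‖ ^ 2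
      - (1 / (2 * η) - L / 2) * ‖q - x‖ ^ 2 := by
  have hup := (abs_le.1 (abs_sub_sub_inner_le_of_lipschitz_gradient hgrad hLip x q)).2
  have hlow := (abs_le.1 (abs_sub_sub_inner_le_of_lipschitz_gradient hgrad hLip x y)).1
  rw [norm_sub_rev y x] at hlow
  have hsplit : ⟪F' x, q - x⟫ = ⟪F' x, y - x⟫ + ⟪v, q - y⟫ - ⟪v - F' x, q - y⟫ := by
    rw [inner_sub_left, ← sub_add_sub_cancel' y x q, inner_add_right]
    ring
  have hthree : ⟪v, q - y⟫ ≤ 1 / (2 * η) * (‖x - y‖ ^ 2 - ‖q - x‖ ^ 2 - ‖y - q‖ ^ 2) := by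
    rw [one_div_mul_eq_div, le_div_iff₀ (by positivity)]
    linarith [hq.two_mul_inner_le hX hy]
  have hyoung : ‖v - F' x‖ * ‖q - y‖ ≤ η / 2 * ‖v - F' x‖ ^ 2 + 1 / (2 * η) * ‖y - q‖ ^ 2 := by
    rw [norm_sub_rev q y, ← sub_nonneg, show η / 2 * ‖v - F' x‖ ^ 2 + 1 / (2 * η) * ‖y - q‖ ^ 2
      - ‖v - F' x‖ * ‖y - q‖ = (η * ‖v - F' x‖ - ‖y - q‖) ^ 2 / (2 * η) by field_simp; ring]
    positivity
  linarith [neg_le_of_abs_le (abs_real_inner_le_norm (v - F' x) (q - y))]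

end Projection

section HiddenConvex

variable {d : ℕ} {μc μH : ℝ} {X U : Set (EuclideanSpace ℝ (Fin d))}
  {c : EuclideanSpace ℝ (Fin d) → EuclideanSpace ℝ (Fin d)} {H F : EuclideanSpace ℝ (Fin d) → ℝ}
  {ustar xstar x : EuclideanSpace ℝ (Fin d)} {α : ℝ}

/-- The witness is the preimage under `c` of `(1 - α) • c x + α • ustar`. -/
theorem HiddenConvex.exists_mem_le (hHC : HiddenConvex μc μH X U c H F ustar) (hμc : 0 ≤ μc)
    (hμH : 0 ≤ μH) (hxstar : xstar ∈ X) (hcxstar : c xstar = ustar) (hx : x ∈ X)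
    (hα0 : 0 < α) (hα1 : α ≤ 1) :
    ∃ y ∈ X, F y + (1 - α) * μc ^ 2 * μH / (2 * α) * ‖x - y‖ ^ 2 ≤ (1 - α) * F x + α * F xstar := by
  obtain ⟨hU, hbij, hexp, hFH, hsc, hustar, -⟩ := hHC
  have hcx : c x ∈ U := hbij.mapsTo hx
  obtain ⟨y, hy, hcy⟩ := hbij.surjOn (hU hcx hustar (sub_nonneg.2 hα1) hα0.le (sub_add_cancel 1 α))
  refine ⟨y, hy, ?_⟩
  have hconv := hsc (c x) hcx ustar hustar α ⟨hα0.le, hα1⟩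
  rw [← hcy, ← hFH y hy, ← hFH x hx, ← hcxstar, ← hFH xstar hxstar, hcxstar] at hconv
  have hdist : μc * ‖x - y‖ ≤ α * ‖c x - ustar‖ := by
    calc μc * ‖x - y‖ ≤ ‖c x - c y‖ := hexp x hx y hy
      _ = α * ‖c x - ustar‖ := by
        rw [hcy, show c x - ((1 - α) • c x + α • ustar) = α • (c x - ustar) by
          rw [smul_sub, sub_smul, one_smul]; abel, norm_smul, Real.norm_of_nonneg hα0.le]
  have hsq : μc ^ 2 * ‖x - y‖ ^ 2 ≤ α ^ 2 * ‖c x - ustar‖ ^ 2 := by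
    rw [← mul_pow, ← mul_pow]
    exact pow_le_pow_left₀ (by positivity) hdist 2
  have hcoef : 0 ≤ (1 - α) * μH / (2 * α) :=
    div_nonneg (mul_nonneg (sub_nonneg.2 hα1) hμH) (by positivity)
  have := mul_le_mul_of_nonneg_left hsq hcoef
  calc F y + (1 - α) * μc ^ 2 * μH / (2 * α) * ‖x - y‖ ^ 2
      = F y + (1 - α) * μH / (2 * α) * (μc ^ 2 * ‖x - y‖ ^ 2) := by ring
    _ ≤ F y + (1 - α) * μH / (2 * α) * (α ^ 2 * ‖c x - ustar‖ ^ 2) := by gcongr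
    _ = F y + (1 - α) * α * μH / 2 * ‖c x - ustar‖ ^ 2 := by field_simp
    _ ≤ (1 - α) * F x + α * F xstar := by linarith

theorem HiddenConvex.sub_le_of_isProjection
    {F' : EuclideanSpace ℝ (Fin d) → EuclideanSpace ℝ (Fin d)} {L η : ℝ}
    {v x' : EuclideanSpace ℝ (Fin d)} (hHC : HiddenConvex μc μH X U c H F ustar) (hμc : 0 ≤ μc)
    (hμH : 0 ≤ μH) (hxstar : xstar ∈ X) (hcxstar : c xstar = ustar) (hX : Convex ℝ X)
    (hgrad : ∀ y, HasGradientAt F (F' y) y) (hLip : ∀ u v, ‖F' u - F' v‖ ≤ L * ‖u - v‖)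
    (hη : 0 < η) (hLη : L * η ≤ 1 / 4) (hα0 : 0 < α) (hα1 : α ≤ 1 / 2)
    (hαη : α ≤ μc ^ 2 * μH * η / 4) (hx : x ∈ X) (hx' : IsProjection X (x - η • v) x') :
    F x' - F xstar ≤ (1 - α) * (F x - F xstar) + η / 2 * ‖v - F' x‖ ^ 2
      - (1 / (2 * η) - L / 2) * ‖x' - x‖ ^ 2 := by
  obtain ⟨y, hy, hFy⟩ := hHC.exists_mem_le hμc hμH hxstar hcxstar hx hα0 (by linarith)
  have hstep := hx'.le_of_lipschitz_gradient hX hgrad hLip hη hy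
  -- the strong-convexity gain `(1 - α) μc² μH / (2α) ≥ 1/η` absorbs the smoothness loss
  have hcoef : 1 / (2 * η) + L / 2 ≤ (1 - α) * μc ^ 2 * μH / (2 * α) := by
    rw [div_add_div _ _ (by positivity) two_ne_zero,
      div_le_div_iff₀ (by positivity) (by positivity)]
    nlinarith
  have := mul_le_mul_of_nonneg_right hcoef (sq_nonneg ‖x - y‖)
  linarith

end HiddenConvex

theorem lipschitzWith_of_norm_sub_le {E E' : Type*} [SeminormedAddCommGroup E]
    [SeminormedAddCommGroup E'] {f : E → E'} {L : ℝ}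
    (h : ∀ u v, ‖f u - f v‖ ≤ L * ‖u - v‖) : LipschitzWith L.toNNReal f :=
  .of_dist_le' fun u v => by simpa only [dist_eq_norm] using h u v

section SquareIntegrable

variable {Ω E : Type*} {mΩ : MeasurableSpace Ω} {μ : Measure Ω} [IsFiniteMeasure μ]
  [NormedAddCommGroup E]

theorem LipschitzWith.memLp_comp {E' : Type*} [NormedAddCommGroup E'] {K : NNReal} {f : E → E'}
    (hf : LipschitzWith K f) {p : ENNReal} {X : Ω → E} (hX : MemLp X p μ) :
    MemLp (fun ω => f (X ω)) p μ := by
  have hf₀ : LipschitzWith K fun u => f u - f 0 :=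
    .of_dist_le_mul fun u v => (dist_sub_right _ _ _).trans_le (hf.dist_le_mul u v)
  convert (hf₀.comp_memLp (sub_self _) hX).add (memLp_const (f 0)) using 1
  funext ω
  simp

theorem integrable_comp_of_lipschitz_gradient [InnerProductSpace ℝ E] [CompleteSpace E]
    {F : E → ℝ} {F' : E → E} {L : ℝ}
    (hgrad : ∀ y, HasGradientAt F (F' y) y) (hLip : ∀ u v, ‖F' u - F' v‖ ≤ L * ‖u - v‖)
    {X : Ω → E} (hX : MemLp X 2 μ) : Integrable (fun ω => F (X ω)) μ := by
  have hF : Continuous F := continuous_iff_continuousAt.2 fun y => (hgrad y).continuousAt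
  refine ((integrable_const |F 0|).add (((hX.integrable one_le_two).norm.const_mul ‖F' 0‖).add
    ((hX.integrable_norm_pow two_ne_zero).const_mul (L / 2)))).mono'
    (hF.comp_aestronglyMeasurable hX.1) (ae_of_all _ fun ω => ?_)
  obtain ⟨hquad₁, hquad₂⟩ :=
    abs_le.1 (abs_sub_sub_inner_le_of_lipschitz_gradient hgrad hLip 0 (X ω))
  obtain ⟨hcs₁, hcs₂⟩ := abs_le.1 (abs_real_inner_le_norm (F' 0) (X ω))
  simp only [sub_zero] at hquad₁ hquad₂
  rw [Real.norm_eq_abs, abs_le, Pi.add_apply, Pi.add_apply]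
  constructor <;> linarith [le_abs_self (F 0), neg_abs_le (F 0)]

theorem integral_sub_add_mul_norm_sub_sq [InnerProductSpace ℝ E] [CompleteSpace E]
    {F : E → ℝ} {F' : E → E} {L : ℝ}
    (hgrad : ∀ y, HasGradientAt F (F' y) y) (hLip : ∀ u v, ‖F' u - F' v‖ ≤ L * ‖u - v‖)
    {X V : Ω → E} (hX : MemLp X 2 μ) (hV : MemLp V 2 μ) (r a : ℝ) :
    ∫ ω, (F (X ω) - r + a * ‖V ω - F' (X ω)‖ ^ 2) ∂μ =
      ∫ ω, (F (X ω) - r) ∂μ + a * ∫ ω, ‖V ω - F' (X ω)‖ ^ 2 ∂μ := by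
  have hFX : Integrable (fun ω => F (X ω) - r) μ :=
    (integrable_comp_of_lipschitz_gradient hgrad hLip hX).sub (integrable_const r)
  have hErr : Integrable (fun ω => ‖V ω - F' (X ω)‖ ^ 2) μ :=
    (hV.sub ((lipschitzWith_of_norm_sub_le hLip).memLp_comp hX)).integrable_norm_pow two_ne_zero
  rw [integral_add hFX (hErr.const_mul a), integral_const_mul]

end SquareIntegrable

section Expectation

variable {Ω E : Type*} {m mΩ : MeasurableSpace Ω} {μ : Measure Ω}
  [NormedAddCommGroup E] [InnerProductSpace ℝ E]

theorem MeasureTheory.MemLp.integrable_inner {V W : Ω → E} (hV : MemLp V 2 μ) (hW : MemLp W 2 μ) :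
    Integrable (fun ω => ⟪V ω, W ω⟫) μ := by
  rw [← memLp_one_iff_integrable]
  exact hV.of_bilin (fun v w => ⟪v, w⟫) 1 hW (hV.1.inner hW.1)
    (ae_of_all _ fun ω => by simpa using nnnorm_inner_le_nnnorm (𝕜 := ℝ) (V ω) (W ω))

theorem integral_inner_eq_zero_of_condExp_eq_zero [CompleteSpace E] [IsFiniteMeasure μ]
    (hm : m ≤ mΩ) {V W : Ω → E} (hV : StronglyMeasurable[m] V) (hVL2 : MemLp V 2 μ)
    (hWL2 : MemLp W 2 μ) (hW : μ[W | m] =ᵐ[μ] 0) :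
    ∫ ω, ⟪V ω, W ω⟫ ∂μ = 0 := by
  have hpull := condExp_bilin_of_stronglyMeasurable_left (innerSL ℝ) hV
    (hVL2.integrable_inner hWL2) (hWL2.integrable one_le_two)
  calc ∫ ω, ⟪V ω, W ω⟫ ∂μ = ∫ ω, μ[fun ω => innerSL ℝ (V ω) (W ω) | m] ω ∂μ :=
        (integral_condExp hm).symm
    _ = 0 := by
      rw [integral_congr_ae (hpull.trans ?_), integral_zero]
      filter_upwards [hW] with ω hω
      simp [hω]

theorem integral_norm_smul_add_smul_sq_of_condExp_eq_zero [CompleteSpace E] [IsFiniteMeasure μ]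
    (hm : m ≤ mΩ) {V W : Ω → E} (hV : StronglyMeasurable[m] V) (hVL2 : MemLp V 2 μ)
    (hWL2 : MemLp W 2 μ) (hW : μ[W | m] =ᵐ[μ] 0) (a b : ℝ) :
    ∫ ω, ‖a • V ω + b • W ω‖ ^ 2 ∂μ = a ^ 2 * ∫ ω, ‖V ω‖ ^ 2 ∂μ + b ^ 2 * ∫ ω, ‖W ω‖ ^ 2 ∂μ := by
  have hexpand (ω : Ω) : ‖a • V ω + b • W ω‖ ^ 2 =
      a ^ 2 * ‖V ω‖ ^ 2 + 2 * (a * b) * ⟪V ω, W ω⟫ + b ^ 2 * ‖W ω‖ ^ 2 := by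
    rw [norm_add_sq_real, real_inner_smul_left, real_inner_smul_right, norm_smul, norm_smul,
      mul_pow, mul_pow, Real.norm_eq_abs, Real.norm_eq_abs, sq_abs, sq_abs]
    ring
  have hV2 := (hVL2.integrable_norm_pow two_ne_zero).const_mul (a ^ 2)
  have hVW := (hVL2.integrable_inner hWL2).const_mul (2 * (a * b))
  have hW2 := (hWL2.integrable_norm_pow two_ne_zero).const_mul (b ^ 2)
  simp only [hexpand]
  rw [integral_add (hV2.fun_add hVW) hW2, integral_add hV2 hVW, integral_const_mul,
    integral_const_mul, integral_const_mul,
    integral_inner_eq_zero_of_condExp_eq_zero hm hV hVL2 hWL2 hW]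
  ring

theorem condExp_sub_ae_eq_zero [CompleteSpace E] [IsFiniteMeasure μ] (hm : m ≤ mΩ) {G f : Ω → E}
    (hG : Integrable G μ) (hf : StronglyMeasurable[m] f) (hfi : Integrable f μ)
    (hGf : μ[G | m] =ᵐ[μ] f) : μ[G - f | m] =ᵐ[μ] 0 := by
  filter_upwards [condExp_sub hG hfi m, hGf] with ω hsub hGω
  rw [hsub, Pi.sub_apply, hGω, condExp_of_stronglyMeasurable hm hf hfi, sub_self, Pi.zero_apply]

theorem integral_le_of_condExp_le [IsProbabilityMeasure μ] (hm : m ≤ mΩ) {f : Ω → ℝ} {C : ℝ}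
    (hf : ∀ᵐ ω ∂μ, μ[f | m] ω ≤ C) : ∫ ω, f ω ∂μ ≤ C := by
  rw [← integral_condExp hm]
  simpa using integral_mono_ae integrable_condExp (integrable_const C) hf

end Expectation

theorem one_sub_sq_mul_norm_sub_sq_le {E : Type*} [SeminormedAddCommGroup E] {F' : E → E}
    {L β : ℝ} (hLip : ∀ u v, ‖F' u - F' v‖ ≤ L * ‖u - v‖) (hβ0 : 0 < β) (hβ1 : β ≤ 1)
    (g x x' : E) :
    (1 - β) ^ 2 * ‖g - F' x'‖ ^ 2 ≤
      (1 - β) * ‖g - F' x‖ ^ 2 + (1 - β) ^ 2 / β * L ^ 2 * ‖x' - x‖ ^ 2 := by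
  have htri : ‖g - F' x'‖ ≤ ‖g - F' x‖ + L * ‖x' - x‖ := by
    calc ‖g - F' x'‖ = ‖(g - F' x) + (F' x - F' x')‖ := by rw [sub_add_sub_cancel]
      _ ≤ ‖g - F' x‖ + ‖F' x - F' x'‖ := norm_add_le _ _
      _ ≤ ‖g - F' x‖ + L * ‖x' - x‖ := by rw [norm_sub_rev x' x]; gcongr; exact hLip x x'
  set A := ‖g - F' x‖
  set B := L * ‖x' - x‖
  -- Young's inequality `(A + B)² ≤ A² / (1 - β) + B² / β`, scaled by `(1 - β)²`
  have hyoung : (1 - β) ^ 2 * (A + B) ^ 2 ≤ (1 - β) * A ^ 2 + (1 - β) ^ 2 / β * B ^ 2 := by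
    have : (1 - β) * A ^ 2 + (1 - β) ^ 2 / β * B ^ 2 - (1 - β) ^ 2 * (A + B) ^ 2
        = (1 - β) * (β * A - (1 - β) * B) ^ 2 / β := by field_simp; ring
    nlinarith [div_nonneg (mul_nonneg (sub_nonneg.2 hβ1) (sq_nonneg (β * A - (1 - β) * B))) hβ0.le]
  calc (1 - β) ^ 2 * ‖g - F' x'‖ ^ 2 ≤ (1 - β) ^ 2 * (A + B) ^ 2 := by gcongr
    _ ≤ _ := hyoung
    _ = _ := by rw [mul_pow]; ring

section MomentumError

variable {Ω E : Type*} {m mΩ : MeasurableSpace Ω} {μ : Measure Ω} [IsProbabilityMeasure μ]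
  [NormedAddCommGroup E] [InnerProductSpace ℝ E] [CompleteSpace E]

theorem integral_norm_momentum_sub_sq_le (hm : m ≤ mΩ) {F' : E → E} {L β σ : ℝ}
    {x x' g G : Ω → E} (hLip : ∀ u v, ‖F' u - F' v‖ ≤ L * ‖u - v‖) (hβ0 : 0 < β) (hβ1 : β ≤ 1)
    (hx' : StronglyMeasurable[m] x') (hg : StronglyMeasurable[m] g)
    (hxL2 : MemLp x 2 μ) (hx'L2 : MemLp x' 2 μ) (hgL2 : MemLp g 2 μ) (hGL2 : MemLp G 2 μ)
    (hcond : μ[G | m] =ᵐ[μ] fun ω => F' (x' ω))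
    (hvar : ∀ᵐ ω ∂μ, μ[fun ω => ‖G ω - F' (x' ω)‖ ^ 2 | m] ω ≤ σ ^ 2) :
    ∫ ω, ‖(1 - β) • g ω + β • G ω - F' (x' ω)‖ ^ 2 ∂μ ≤
      (1 - β) * ∫ ω, ‖g ω - F' (x ω)‖ ^ 2 ∂μ
        + (1 - β) ^ 2 / β * L ^ 2 * ∫ ω, ‖x' ω - x ω‖ ^ 2 ∂μ + β ^ 2 * σ ^ 2 := by
  have hF' := lipschitzWith_of_norm_sub_le hLip
  have hF'x' : StronglyMeasurable[m] fun ω => F' (x' ω) :=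
    hF'.continuous.comp_stronglyMeasurable hx'
  have hVL2 : MemLp (fun ω => g ω - F' (x' ω)) 2 μ := hgL2.sub (hF'.memLp_comp hx'L2)
  have hWL2 : MemLp (fun ω => G ω - F' (x' ω)) 2 μ := hGL2.sub (hF'.memLp_comp hx'L2)
  have hW := condExp_sub_ae_eq_zero hm (hGL2.integrable one_le_two) hF'x'
    ((hF'.memLp_comp hx'L2).integrable one_le_two) hcond
  have hsplit : ∫ ω, ‖(1 - β) • g ω + β • G ω - F' (x' ω)‖ ^ 2 ∂μ =
      (1 - β) ^ 2 * ∫ ω, ‖g ω - F' (x' ω)‖ ^ 2 ∂μ + β ^ 2 * ∫ ω, ‖G ω - F' (x' ω)‖ ^ 2 ∂μ := by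
    simp_rw [show ∀ ω, (1 - β) • g ω + β • G ω - F' (x' ω)
        = (1 - β) • (g ω - F' (x' ω)) + β • (G ω - F' (x' ω)) from fun ω => by module]
    exact integral_norm_smul_add_smul_sq_of_condExp_eq_zero hm (hg.sub hF'x') hVL2 hWL2 hW _ _
  have hV2 : Integrable (fun ω => ‖g ω - F' (x' ω)‖ ^ 2) μ := hVL2.integrable_norm_pow two_ne_zero
  have hE2 : Integrable (fun ω => ‖g ω - F' (x ω)‖ ^ 2) μ :=
    (hgL2.sub (hF'.memLp_comp hxL2)).integrable_norm_pow two_ne_zero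
  have hR2 : Integrable (fun ω => ‖x' ω - x ω‖ ^ 2) μ :=
    (hx'L2.sub hxL2).integrable_norm_pow two_ne_zero
  have hbias : (1 - β) ^ 2 * ∫ ω, ‖g ω - F' (x' ω)‖ ^ 2 ∂μ ≤
      (1 - β) * ∫ ω, ‖g ω - F' (x ω)‖ ^ 2 ∂μ
        + (1 - β) ^ 2 / β * L ^ 2 * ∫ ω, ‖x' ω - x ω‖ ^ 2 ∂μ := by
    rw [← integral_const_mul, ← integral_const_mul, ← integral_const_mul,
      ← integral_add (hE2.const_mul _) (hR2.const_mul _)]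
    exact integral_mono (hV2.const_mul _) ((hE2.const_mul _).fun_add (hR2.const_mul _))
      fun ω => one_sub_sq_mul_norm_sub_sq_le hLip hβ0 hβ1 (g ω) (x ω) (x' ω)
  have hnoise' := mul_le_mul_of_nonneg_left (integral_le_of_condExp_le hm hvar) (sq_nonneg β)
  rw [hsplit]
  linarith

end MomentumError

theorem HiddenConvex.integral_sub_le_of_isProjection {d : ℕ} {Ω : Type*} {mΩ : MeasurableSpace Ω}
    {μ : Measure Ω} [IsProbabilityMeasure μ] {μc μH L η α : ℝ}
    {X U : Set (EuclideanSpace ℝ (Fin d))}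
    {c F' : EuclideanSpace ℝ (Fin d) → EuclideanSpace ℝ (Fin d)}
    {H F : EuclideanSpace ℝ (Fin d) → ℝ} {ustar xstar : EuclideanSpace ℝ (Fin d)}
    {x v x' : Ω → EuclideanSpace ℝ (Fin d)}
    (hHC : HiddenConvex μc μH X U c H F ustar) (hμc : 0 ≤ μc) (hμH : 0 ≤ μH)
    (hxstar : xstar ∈ X) (hcxstar : c xstar = ustar) (hX : Convex ℝ X)
    (hgrad : ∀ y, HasGradientAt F (F' y) y) (hLip : ∀ u v, ‖F' u - F' v‖ ≤ L * ‖u - v‖)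
    (hη : 0 < η) (hLη : L * η ≤ 1 / 4) (hα0 : 0 < α) (hα1 : α ≤ 1 / 2)
    (hαη : α ≤ μc ^ 2 * μH * η / 4) (hx : ∀ ω, x ω ∈ X)
    (hx' : ∀ ω, IsProjection X (x ω - η • v ω) (x' ω))
    (hxL2 : MemLp x 2 μ) (hx'L2 : MemLp x' 2 μ) (hvL2 : MemLp v 2 μ) :
    ∫ ω, (F (x' ω) - F xstar) ∂μ ≤ (1 - α) * ∫ ω, (F (x ω) - F xstar) ∂μ
      + η / 2 * ∫ ω, ‖v ω - F' (x ω)‖ ^ 2 ∂μ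
      - (1 / (2 * η) - L / 2) * ∫ ω, ‖x' ω - x ω‖ ^ 2 ∂μ := by
  have hF'x := (lipschitzWith_of_norm_sub_le hLip).memLp_comp hxL2
  have hFx : Integrable (fun ω => F (x ω) - F xstar) μ :=
    (integrable_comp_of_lipschitz_gradient hgrad hLip hxL2).sub (integrable_const _)
  have hFx' : Integrable (fun ω => F (x' ω) - F xstar) μ :=
    (integrable_comp_of_lipschitz_gradient hgrad hLip hx'L2).sub (integrable_const _)
  have hE2 : Integrable (fun ω => ‖v ω - F' (x ω)‖ ^ 2) μ :=
    (hvL2.sub hF'x).integrable_norm_pow two_ne_zero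
  have hR2 : Integrable (fun ω => ‖x' ω - x ω‖ ^ 2) μ :=
    (hx'L2.sub hxL2).integrable_norm_pow two_ne_zero
  rw [← integral_const_mul, ← integral_const_mul, ← integral_const_mul,
    ← integral_add (hFx.const_mul _) (hE2.const_mul _),
    ← integral_sub ((hFx.const_mul _).fun_add (hE2.const_mul _)) (hR2.const_mul _)]
  exact integral_mono hFx' (((hFx.const_mul _).fun_add (hE2.const_mul _)).sub (hR2.const_mul _))
    fun ω => hHC.sub_le_of_isProjection hμc hμH hxstar hcxstar hX hgrad hLip hη hLη hα0 hα1 hαη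
      (hx ω) (hx' ω)

theorem lyapunov_succ_le {A A' B B' R L η β α σ : ℝ} (hL : 0 < L) (hη : 0 < η) (hβ0 : 0 < β)
    (hβ1 : β ≤ 1) (hηL : η ≤ β / (4 * L)) (hαβ : α ≤ β / 2) (hB : 0 ≤ B) (hR : 0 ≤ R)
    (hA' : A' ≤ (1 - α) * A + η / 2 * B - (1 / (2 * η) - L / 2) * R)
    (hB' : B' ≤ (1 - β) * B + (1 - β) ^ 2 / β * L ^ 2 * R + β ^ 2 * σ ^ 2) :
    A' + η / β * B' ≤ (1 - α) * (A + η / β * B) + β * η * σ ^ 2 := by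
  have hηLβ : η * (4 * L) ≤ β := (le_div_iff₀ (by positivity)).1 hηL
  have hcB : η / 2 + η / β * (1 - β) ≤ (1 - α) * (η / β) := by
    rw [← sub_nonneg, show (1 - α) * (η / β) - (η / 2 + η / β * (1 - β))
      = η * (β - 2 * α) / (2 * β) by field_simp; ring]
    exact div_nonneg (mul_nonneg hη.le (by linarith)) (by positivity)
  have hcR : η / β * ((1 - β) ^ 2 / β * L ^ 2) ≤ 1 / (2 * η) - L / 2 := by
    have hs : 4 * (η * L * (1 - β)) ≤ β := by nlinarith [mul_pos hη hL]
    rw [← sub_nonneg, show 1 / (2 * η) - L / 2 - η / β * ((1 - β) ^ 2 / β * L ^ 2)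
      = (8 * β ^ 2 - 8 * (η * L) * β ^ 2 - 16 * (η * L * (1 - β)) ^ 2) / (16 * η * β ^ 2) by
        field_simp; ring]
    refine div_nonneg ?_ (by positivity)
    nlinarith [mul_pos hη hL]
  have hσ : η / β * (β ^ 2 * σ ^ 2) = β * η * σ ^ 2 := by field_simp
  nlinarith [mul_le_mul_of_nonneg_left hB' (div_nonneg hη.le hβ0.le),
    mul_le_mul_of_nonneg_right hcB hB, mul_le_mul_of_nonneg_right hcR hR]

theorem le_one_sub_pow_mul_add_div {a : ℕ → ℝ} {α b : ℝ} (hα0 : 0 < α) (hα1 : α ≤ 1)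
    (hb : 0 ≤ b) (h : ∀ t, a (t + 1) ≤ (1 - α) * a t + b) (T : ℕ) :
    a T ≤ (1 - α) ^ T * a 0 + b / α := by
  induction T with
  | zero => simpa using div_nonneg hb hα0.le
  | succ T ih =>
    calc a (T + 1) ≤ (1 - α) * ((1 - α) ^ T * a 0 + b / α) + b :=
          (h T).trans (by gcongr)
      _ = (1 - α) ^ (T + 1) * a 0 + b / α := by field_simp; ring

section Iterates

variable {Ω : Type} [mΩ : MeasurableSpace Ω] {d : ℕ} {g G : ℕ → Ω → EuclideanSpace ℝ (Fin d)}
  {β : ℝ}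

theorem hbFiltration_le (hg0 : Measurable (g 0)) (hG : ∀ t, Measurable (G (t + 1))) (t : ℕ) :
    hbFiltration (g 0) G t ≤ mΩ := by
  refine sup_le hg0.comap_le (iSup₂_le fun i hi => ?_)
  obtain ⟨j, rfl⟩ := Nat.exists_eq_add_of_le' (Finset.mem_Icc.1 hi).1
  exact (hG j).comap_le

theorem hbFiltration_mono (g0 : Ω → EuclideanSpace ℝ (Fin d)) : Monotone (hbFiltration g0 G) := by
  intro s t hst
  refine sup_le_sup le_rfl (iSup₂_le fun i hi => le_iSup₂_of_le i ?_ le_rfl)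
  exact Finset.mem_Icc.2 ⟨(Finset.mem_Icc.1 hi).1, (Finset.mem_Icc.1 hi).2.trans hst⟩

theorem measurable_hbFiltration_succ (g0 : Ω → EuclideanSpace ℝ (Fin d)) (t : ℕ) :
    Measurable[hbFiltration g0 G (t + 1)] (G (t + 1)) :=
  measurable_iff_comap_le.2 (le_sup_of_le_right
    (le_iSup₂_of_le (t + 1) (Finset.mem_Icc.2 ⟨le_add_self, le_rfl⟩) le_rfl))

theorem measurable_hbFiltration_momentum
    (hrec : ∀ t ω, g (t + 1) ω = (1 - β) • g t ω + β • G (t + 1) ω) (t : ℕ) :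
    Measurable[hbFiltration (g 0) G t] (g t) := by
  induction t with
  | zero => exact measurable_iff_comap_le.2 le_sup_left
  | succ t ih =>
    rw [funext (hrec t)]
    exact ((ih.mono (hbFiltration_mono _ t.le_succ) le_rfl).const_smul (1 - β)).add
      ((measurable_hbFiltration_succ _ t).const_smul β)

theorem memLp_momentum {μ : Measure Ω} (hg0 : MemLp (g 0) 2 μ) (hG : ∀ t, MemLp (G (t + 1)) 2 μ)
    (hrec : ∀ t ω, g (t + 1) ω = (1 - β) • g t ω + β • G (t + 1) ω) (t : ℕ) :
    MemLp (g t) 2 μ := by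
  induction t with
  | zero => exact hg0
  | succ t ih =>
    rw [funext (hrec t)]
    exact (ih.const_smul (1 - β)).add ((hG t).const_smul β)

theorem memLp_of_isProjection {μ : Measure Ω} [IsFiniteMeasure μ]
    {X : Set (EuclideanSpace ℝ (Fin d))}
    {x : ℕ → Ω → EuclideanSpace ℝ (Fin d)} {η : ℝ} {x0 : EuclideanSpace ℝ (Fin d)}
    (hx0X : x0 ∈ X) (hx0 : ∀ ω, x 0 ω = x0) (hg : ∀ t, MemLp (g t) 2 μ)
    (hx : ∀ t, AEStronglyMeasurable (x (t + 1)) μ)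
    (hrec : ∀ t ω, IsProjection X (x t ω - η • g t ω) (x (t + 1) ω)) (t : ℕ) :
    MemLp (x t) 2 μ := by
  induction t with
  | zero => simpa only [funext hx0] using memLp_const x0
  | succ t ih =>
    refine ((memLp_const ‖x0‖).add (((ih.sub ((hg t).const_smul η)).norm).const_mul 2)).of_le (hx t)
      (ae_of_all _ fun ω => ?_)
    simp only [Pi.add_apply, Pi.sub_apply, Pi.smul_apply]
    exact ((hrec t ω).norm_le hx0X).trans (le_abs_self _)

end Iterates

theorem psgd_momentum_convergence_hidden_strongly_convex_general {d : ℕ}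
    {Ω : Type} [MeasurableSpace Ω] (μ : Measure Ω) [IsProbabilityMeasure μ]
    (X U : Set (EuclideanSpace ℝ (Fin d))) (hXcvx : Convex ℝ X)
    (F H : EuclideanSpace ℝ (Fin d) → ℝ) (c : EuclideanSpace ℝ (Fin d) → EuclideanSpace ℝ (Fin d)) (F' : EuclideanSpace ℝ (Fin d) → EuclideanSpace ℝ (Fin d))
    (L μc μH η β σ : ℝ) (hL : 0 < L) (hμc : 0 < μc) (hμH : 0 < μH)
    (ustar xstar : EuclideanSpace ℝ (Fin d))
    (hgrad : ∀ y, HasGradientAt F (F' y) y)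
    (hLip : ∀ u v : EuclideanSpace ℝ (Fin d), ‖F' u - F' v‖ ≤ L * ‖u - v‖)
    (hHC : HiddenConvex μc μH X U c H F ustar)
    (hxstar : xstar ∈ X) (hcxstar : c xstar = ustar)
    (hβ : β ∈ Set.Ioc (0 : ℝ) 1) (hη0 : 0 < η) (hη : η ≤ β / (4 * L))
    (x g G : ℕ → Ω → EuclideanSpace ℝ (Fin d)) (x0 : EuclideanSpace ℝ (Fin d)) (hx0X : x0 ∈ X) (hx0 : ∀ ω, x 0 ω = x0)
    (hg0meas : Measurable (g 0)) (hg0L2 : MemLp (g 0) 2 μ)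
    (hGmeas : ∀ t, Measurable (G (t + 1))) (hGL2 : ∀ t, MemLp (G (t + 1)) 2 μ)
    (hrecx : ∀ t ω, IsProjection X (x t ω - η • g t ω) (x (t + 1) ω))
    (hrecg : ∀ t ω, g (t + 1) ω = (1 - β) • g t ω + β • G (t + 1) ω)
    (hadapt : ∀ t, @Measurable Ω (EuclideanSpace ℝ (Fin d)) (hbFiltration (g 0) G t) _ (x (t + 1)))
    (hcond : ∀ t, μ[G (t + 1) | hbFiltration (g 0) G t] =ᵐ[μ]
      fun ω => F' (x (t + 1) ω))
    (hvar : ∀ t, ∀ᵐ ω ∂μ,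
      (μ[(fun ω' => ‖G (t + 1) ω' - F' (x (t + 1) ω')‖ ^ 2) |
        hbFiltration (g 0) G t]) ω ≤ σ ^ 2) :
    ∀ α : ℝ, 0 < α → α ≤ min (β / 2) (μc ^ 2 * μH * η / 4) → ∀ T : ℕ,
      (∫ ω, (F (x T ω) - F xstar + η / β * ‖g T ω - F' (x T ω)‖ ^ 2) ∂μ) ≤
        (1 - α) ^ T *
            (∫ ω, (F (x 0 ω) - F xstar + η / β * ‖g 0 ω - F' (x 0 ω)‖ ^ 2) ∂μ)
          + β * η * σ ^ 2 / α := by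
  intro α hα0 hα T
  obtain ⟨hβ0, hβ1⟩ := hβ
  obtain ⟨hαβ, hαη⟩ := le_min_iff.1 hα
  have hLη : L * η ≤ 1 / 4 := by nlinarith [(le_div_iff₀ (by positivity)).1 hη]
  have hℱ := hbFiltration_le hg0meas hGmeas
  have hgL2 := memLp_momentum hg0L2 hGL2 hrecg
  have hxL2 := memLp_of_isProjection hx0X hx0 hgL2
    (fun t => ((hadapt t).mono (hℱ t) le_rfl).aestronglyMeasurable) hrecx
  have hxX (t : ℕ) (ω : Ω) : x t ω ∈ X := by
    cases t with
    | zero => exact hx0 ω ▸ hx0X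
    | succ t => exact (hrecx t ω).1
  have hgap (t : ℕ) := hHC.integral_sub_le_of_isProjection hμc.le hμH.le hxstar hcxstar hXcvx
    hgrad hLip hη0 hLη hα0 (by linarith) hαη (hxX t) (hrecx t) (hxL2 t) (hxL2 (t + 1)) (hgL2 t)
  have herr (t : ℕ) := integral_norm_momentum_sub_sq_le (hℱ t) hLip hβ0 hβ1
    (hadapt t).stronglyMeasurable (measurable_hbFiltration_momentum hrecg t).stronglyMeasurable
    (hxL2 t) (hxL2 (t + 1)) (hgL2 t) (hGL2 t) (hcond t) (hvar t)
  simp only [← hrecg] at herr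
  rw [integral_sub_add_mul_norm_sub_sq hgrad hLip (hxL2 T) (hgL2 T),
    integral_sub_add_mul_norm_sub_sq hgrad hLip (hxL2 0) (hgL2 0)]
  refine le_one_sub_pow_mul_add_div (a := fun t => ∫ ω, (F (x t ω) - F xstar) ∂μ
    + η / β * ∫ ω, ‖g t ω - F' (x t ω)‖ ^ 2 ∂μ) hα0 (by linarith) (by positivity) (fun t => ?_) T
  exact lyapunov_succ_le hL hη0 hβ0 hβ1 hη hαβ
    (integral_nonneg fun _ => sq_nonneg _) (integral_nonneg fun _ => sq_nonneg _) (hgap t) (herr t)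

/-- Theorem 6.4: last-iterate convergence of projected SGD with Polyak momentum in the
hidden strongly convex setting (`μ_H > 0`). -/
theorem psgd_momentum_convergence_hidden_strongly_convex {d : ℕ}
    {Ω : Type} [MeasurableSpace Ω] (μ : Measure Ω) [IsProbabilityMeasure μ]
    (X U : Set (EuclideanSpace ℝ (Fin d))) (hXne : X.Nonempty) (hXcl : IsClosed X) (hXcvx : Convex ℝ X)
    (F H : EuclideanSpace ℝ (Fin d) → ℝ) (c : EuclideanSpace ℝ (Fin d) → EuclideanSpace ℝ (Fin d)) (F' : EuclideanSpace ℝ (Fin d) → EuclideanSpace ℝ (Fin d))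
    (L μc μH η β σ : ℝ) (hL : 0 < L) (hμc : 0 < μc) (hμH : 0 < μH)
    (ustar xstar : EuclideanSpace ℝ (Fin d))
    (hgrad : ∀ y, HasGradientAt F (F' y) y)
    (hLip : ∀ u v : EuclideanSpace ℝ (Fin d), ‖F' u - F' v‖ ≤ L * ‖u - v‖)
    (hHC : HiddenConvex μc μH X U c H F ustar)
    (hxstar : xstar ∈ X) (hcxstar : c xstar = ustar)
    (hβ : β ∈ Set.Ioc (0 : ℝ) 1) (hη0 : 0 < η) (hη : η ≤ β / (4 * L))
    (x g G : ℕ → Ω → EuclideanSpace ℝ (Fin d)) (x0 : EuclideanSpace ℝ (Fin d)) (hx0X : x0 ∈ X) (hx0 : ∀ ω, x 0 ω = x0)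
    (hg0meas : Measurable (g 0)) (hg0L2 : MemLp (g 0) 2 μ)
    (hGmeas : ∀ t, Measurable (G (t + 1))) (hGL2 : ∀ t, MemLp (G (t + 1)) 2 μ)
    (hrecx : ∀ t ω, IsProjection X (x t ω - η • g t ω) (x (t + 1) ω))
    (hrecg : ∀ t ω, g (t + 1) ω = (1 - β) • g t ω + β • G (t + 1) ω)
    (hadapt : ∀ t, @Measurable Ω (EuclideanSpace ℝ (Fin d)) (hbFiltration (g 0) G t) _ (x (t + 1)))
    (hcond : ∀ t, μ[G (t + 1) | hbFiltration (g 0) G t] =ᵐ[μ]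
      fun ω => F' (x (t + 1) ω))
    (hvar : ∀ t, ∀ᵐ ω ∂μ,
      (μ[(fun ω' => ‖G (t + 1) ω' - F' (x (t + 1) ω')‖ ^ 2) |
        hbFiltration (g 0) G t]) ω ≤ σ ^ 2) :
    ∀ α : ℝ, 0 < α → α ≤ min (β / 2) (μc ^ 2 * μH * η / 4) → ∀ T : ℕ,
      (∫ ω, (F (x T ω) - F xstar + η / β * ‖g T ω - F' (x T ω)‖ ^ 2) ∂μ) ≤
        (1 - α) ^ T *
            (∫ ω, (F (x 0 ω) - F xstar + η / β * ‖g 0 ω - F' (x 0 ω)‖ ^ 2) ∂μ)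
          + β * η * σ ^ 2 / α :=
  psgd_momentum_convergence_hidden_strongly_convex_general μ X U hXcvx F H c F' L μc μH η β σ hL hμc
    hμH ustar xstar hgrad hLip hHC hxstar hcxstar hβ hη0 hη x g G x0 hx0X hx0 hg0meas hg0L2 hGmeas
    hGL2 hrecx hrecg hadapt hcond hvar
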